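/- Let L be a distributive lattice, n a positive integer, and x_1,...,x_n ∈ L. The set {x_1,...,x_n} is totally ordered (i.e., any two of the x_i are comparable) if and only if the set {M_1(x_1,...,x_n), M_2(x_1,...,x_n), ..., M_n(x_1,...,x_n)} equals the set {x_1,...,x_n}. -/

import Mathlib

open Finset

/-- `Mk x k` is `M_{k+1}(x_1,...,x_n)` (`k : Fin n` represents the 1-indexed index `k+1`):
the supremum over all subsets `I` of `{1,...,n}` of cardinality `n + 1 - (k+1) = n - k` of
the infima `⋀_{i ∈ I} x i`. -/
def Mk {L : Type*} [Lattice L] {n : ℕ} (x : Fin n → L) (k : Fin n) : L :=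
  ((univ : Finset (Fin n)).powersetCard (n - k.val)).attach.sup'
    (attach_nonempty_iff.mpr (powersetCard_nonempty.mpr (by simp)))
    fun I => I.1.inf' (card_pos.mp (by
      have h := (mem_powersetCard.mp I.2).2
      have hk := k.isLt
      omega)) x

/-!
`M_k` is monotone in `k` in any lattice, so if every `x_i` is some `M_k` the `x_i` form a chain.
Conversely, on a chain every finite infimum and supremum of the `x_i` is again some `x_i`, so each
`M_k` lies in `{x_1, …, x_n}`; and `x_j = M_k` for `n - k` the number of `i` with `x_j ≤ x_i`:
this set `S` witnesses `x_j ≤ M_k`, while any `I` with `#I = #S` meets the complement of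
`S \ {j}`, i.e. contains some `x_i ≤ x_j`.
-/

section Lattice

variable {L : Type*} [Lattice L] {n : ℕ} (x : Fin n → L)

lemma Mk_le {k : Fin n} {a : L}
    (h : ∀ I : Finset (Fin n), #I = n - k → ∀ hI : I.Nonempty, I.inf' hI x ≤ a) :
    Mk x k ≤ a :=
  sup'_le _ _ fun I _ => h I.1 (mem_powersetCard.mp I.2).2 _

lemma le_Mk {k : Fin n} {a : L} {I : Finset (Fin n)} (hI : #I = n - k)
    (h : ∀ i ∈ I, a ≤ x i) : a ≤ Mk x k := by
  have hI_mem : I ∈ (univ : Finset (Fin n)).powersetCard (n - k) :=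
    mem_powersetCard.mpr ⟨subset_univ I, hI⟩
  exact (le_inf' _ _ h).trans (le_sup' (s := (powersetCard _ univ).attach)
    (fun J => J.1.inf' _ x) (mem_attach _ ⟨I, hI_mem⟩))

lemma monotone_Mk : Monotone (Mk x) := by
  intro k k' hkk'
  refine Mk_le x fun I hI hne => ?_
  obtain ⟨I', hI'I, hI'⟩ := exists_subset_card_eq (s := I) (n := n - k') (by omega)
  exact le_Mk x hI' fun i hi => inf'_le x (hI'I hi)

variable {x}

lemma Mk_mem_range_of_chain (hx : ∀ i j, x i ≤ x j ∨ x j ≤ x i) (k : Fin n) :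
    Mk x k ∈ Set.range x := by
  have hsup : ∀ a ∈ Set.range x, ∀ b ∈ Set.range x, a ⊔ b ∈ Set.range x := by
    rintro _ ⟨i, rfl⟩ _ ⟨j, rfl⟩
    rcases hx i j with h | h
    · exact ⟨j, (sup_eq_right.mpr h).symm⟩
    · exact ⟨i, (sup_eq_left.mpr h).symm⟩
  have hinf : ∀ a ∈ Set.range x, ∀ b ∈ Set.range x, a ⊓ b ∈ Set.range x := by
    rintro _ ⟨i, rfl⟩ _ ⟨j, rfl⟩
    rcases hx i j with h | h
    · exact ⟨i, (inf_eq_left.mpr h).symm⟩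
    · exact ⟨j, (inf_eq_right.mpr h).symm⟩
  exact sup'_mem _ hsup _ _ _ fun I _ => inf'_mem _ hinf _ _ _ fun i _ => ⟨i, rfl⟩

lemma exists_Mk_eq_of_chain (hx : ∀ i j, x i ≤ x j ∨ x j ≤ x i) (j : Fin n) :
    ∃ k, Mk x k = x j := by
  classical
  set S : Finset (Fin n) := {i | x j ≤ x i} with hS
  have hjS : j ∈ S := by simp [hS]
  have hS_pos : 0 < #S := card_pos.mpr ⟨j, hjS⟩
  have hS_le : #S ≤ n := card_le_univ S |>.trans_eq (Fintype.card_fin n)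
  have hcard : #S = n - (n - #S) := by omega
  refine ⟨⟨n - #S, by omega⟩, le_antisymm (Mk_le x fun I hI hne => ?_)
    (le_Mk x hcard fun i hi => (mem_filter.mp hi).2)⟩
  obtain ⟨i, hiI, hiS⟩ :=
    exists_mem_notMem_of_card_lt_card (s := S.erase j) (t := I) (by
      rw [card_erase_of_mem hjS]
      simp only at hI
      omega)
  have hij : x i ≤ x j := by
    by_cases hji : i = j
    · exact hji ▸ le_rfl
    · exact (hx i j).resolve_right fun h => hiS (mem_erase.mpr ⟨hji, by simpa [hS] using h⟩)
  exact (inf'_le x hiI).trans hij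

end Lattice

theorem statement5_general {L : Type*} [DistribLattice L] {n : ℕ}
    (x : Fin n → L) :
    (∀ i j : Fin n, x i ≤ x j ∨ x j ≤ x i) ↔
      Set.range (fun k => Mk x k) = Set.range x := by
  constructor
  · intro hx
    refine subset_antisymm ?_ ?_
    · rintro _ ⟨k, rfl⟩
      exact Mk_mem_range_of_chain hx k
    · rintro _ ⟨j, rfl⟩
      exact exists_Mk_eq_of_chain hx j
  · intro h i j
    obtain ⟨k, hk⟩ : x i ∈ Set.range (Mk x) := h ▸ Set.mem_range_self i
    obtain ⟨k', hk'⟩ : x j ∈ Set.range (Mk x) := h ▸ Set.mem_range_self j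
    rw [← hk, ← hk']
    exact (le_total k k').imp (fun h => monotone_Mk x h) (fun h => monotone_Mk x h)

/-- The set `{x_1,...,x_n}` is totally ordered if and only if the total orderization
`{M_1(x_1,...,x_n),...,M_n(x_1,...,x_n)}` equals `{x_1,...,x_n}` as a set. -/
theorem statement5 {L : Type*} [DistribLattice L] {n : ℕ} (hn : 0 < n)
    (x : Fin n → L) :
    (∀ i j : Fin n, x i ≤ x j ∨ x j ≤ x i) ↔
      Set.range (fun k => Mk x k) = Set.range x :=
  statement5_general x
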